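/- arXiv:2212.12954 — 2 statements merged into one kernel-verified Lean document; each statement's English description precedes it below -/
import Mathlib

section
/- For all measurable γ1, γ2 : W → I and any true distribution P* = ⊗_{i=1}^n P_i* of the independent data X₁,…,Xₙ, the expectation of the T-statistic satisfies E[T(X, γ1, γ2)] ≤ 4 h²(P*, P_{γ1}) − (3/8) h²(P*, P_{γ2}). -/
open MeasureTheory ProbabilityTheory Real
open scoped ENNReal NNReal BigOperators

noncomputable section

/-- Squared Hellinger distance `h²(P,Q)` between two measures on `Y`
(computed with densities with respect to the dominating measure `P + Q`). -/
def hellingerSq {Y : Type*} [MeasurableSpace Y] (P Q : Measure Y) : ℝ :=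
  (1 / 2) * ∫ y, (Real.sqrt ((P.rnDeriv (P + Q)) y).toReal
      - Real.sqrt ((Q.rnDeriv (P + Q)) y).toReal) ^ 2 ∂(P + Q)

/-- A one-parameter exponential family (in general form) on `(Y, ν)` with parameter set the
nontrivial interval `I ⊆ ℝ`: densities `r_γ(y) = exp (u γ * T y - A γ)` with respect to `ν`,
where `T` is measurable and not `ν`-a.e. constant, `u` is continuous and strictly monotone
on `I`, and `exp (A γ) = ∫ exp (u γ * T y) dν(y)` (so each `R_γ` is a probability). -/
structure ExpFamily {Y : Type*} [MeasurableSpace Y] (ν : Measure Y) (I : Set ℝ) where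
  T : Y → ℝ
  u : ℝ → ℝ
  A : ℝ → ℝ
  meas_T : Measurable T
  not_const : ¬ ∃ c : ℝ, T =ᵐ[ν] fun _ => c
  nontrivial : ∃ x ∈ I, ∃ y ∈ I, x < y
  interval : I.OrdConnected
  cont_u : ContinuousOn u I
  mono_u : StrictMonoOn u I ∨ StrictAntiOn u I
  A_spec : ∀ γ ∈ I, Real.exp (A γ) = ∫ y, Real.exp (u γ * T y) ∂ν

namespace ExpFamily

variable {Y : Type*} [MeasurableSpace Y] {ν : Measure Y} {I : Set ℝ}

/-- The density `r_γ` of the exponential family. -/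
def r (E : ExpFamily ν I) (γ : ℝ) (y : Y) : ℝ :=
  Real.exp (E.u γ * E.T y - E.A γ)

/-- The probability `R_γ = r_γ · ν` of the exponential family. -/
def R (E : ExpFamily ν I) (γ : ℝ) : Measure Y :=
  ν.withDensity fun y => ENNReal.ofReal (E.r γ y)

end ExpFamily

/-- `ψ(x) = (x-1)/(x+1)` (on `[0,∞)`). -/
def psi (x : ℝ) : ℝ := (x - 1) / (x + 1)

/-- The `T`-statistic `T(X,γ,γ') = Σᵢ ψ(√(r_{γ'(Wᵢ)}(Yᵢ)/r_{γ(Wᵢ)}(Yᵢ)))`. The densities of an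
exponential family are everywhere positive, so the conventions `0/0 = 1`, `a/0 = +∞` are
never needed here. -/
def Tstat {W Y : Type*} [MeasurableSpace Y] {ν : Measure Y} {I : Set ℝ}
    (E : ExpFamily ν I) {n : ℕ} (γ γ' : W → ℝ) (ω : Fin n → W × Y) : ℝ :=
  ∑ i, psi (Real.sqrt (E.r (γ' (ω i).1) (ω i).2 / E.r (γ (ω i).1) (ω i).2))

/-- A (finite) partition of `W`: nonempty pairwise disjoint cells covering `W`. -/
def IsPartition {W : Type*} (m : Set (Set W)) : Prop :=
  m.Finite ∧ (∀ K ∈ m, K.Nonempty) ∧ m.PairwiseDisjoint id ∧ ⋃₀ m = Set.univ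

/-- The refined partition `m1 ∨ m2`. -/
def partJoin {W : Type*} (m1 m2 : Set (Set W)) : Set (Set W) :=
  {K | ∃ K1 ∈ m1, ∃ K2 ∈ m2, K = K1 ∩ K2 ∧ (K1 ∩ K2).Nonempty}

/-- `γ` is constant on each cell of the partition `m`. -/
def ConstantOnCells {W : Type*} (γ : W → ℝ) (m : Set (Set W)) : Prop :=
  ∀ K ∈ m, ∀ w ∈ K, ∀ w' ∈ K, γ w = γ w'

/-- `log₊ x = max (log x) 0`. -/
def logPlus (x : ℝ) : ℝ := max (Real.log x) 0

/-- `D_n(m) = |m| (9.11 + log₊(n/|m|))`. -/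
def Dn {W : Type*} (n : ℕ) (m : Set (Set W)) : ℝ :=
  (m.ncard : ℝ) * (9.11 + logPlus ((n : ℝ) / (m.ncard : ℝ)))

/-- The pseudo-Hellinger risk `h²(R*, R_γ) = Σᵢ ∫ h²(Rᵢ*(w), R_{γ(w)}) dP_{Wᵢ}(w)`. -/
def kernRisk {W Y : Type*} [MeasurableSpace W] [MeasurableSpace Y] {ν : Measure Y} {I : Set ℝ}
    (E : ExpFamily ν I) {n : ℕ} (μW : Fin n → Measure W)
    (Rstar : Fin n → Kernel W Y) (γ : W → ℝ) : ℝ :=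
  ∑ i, ∫ w, hellingerSq (Rstar i w) (E.R (γ w)) ∂(μW i)

/-- The selection criterion `υ(X, γ̂_λ) = sup_{λ'} [T(X, γ̂_λ, γ̂_{λ'}) - pen(γ̂_{λ'})] + pen(γ̂_λ)`. -/
def selCrit {W Y : Type*} [MeasurableSpace Y] {ν : Measure Y} {I : Set ℝ}
    (E : ExpFamily ν I) {n : ℕ} {Λ : Type*}
    (γhat : Λ → (Fin n → W × Y) → (W → ℝ)) (pen : (W → ℝ) → ℝ)
    (ω : Fin n → W × Y) (l : Λ) : ℝ :=
  (⨆ l' : Λ, (Tstat E (γhat l ω) (γhat l' ω) ω - pen (γhat l' ω))) + pen (γhat l ω)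

/-- `Ξ(γ) = inf_{m ∈ 𝓜(γ)} [D_n(m) + Δ(m)]`. -/
def XiOf {W : Type*} (n : ℕ) (𝓜 : Set (Set (Set W))) (Γm : Set (Set W) → Set (W → ℝ))
    (Δ : Set (Set W) → ℝ) (γ : W → ℝ) : ℝ :=
  ⨅ m : {m // m ∈ 𝓜 ∧ γ ∈ Γm m}, (Dn n m.1 + Δ m.1)

/-- The joint distribution `P_γ` of `(W, Y)` when `W ∼ μ` and `Y | W = w ∼ R_{γ(w)}`,
realized as the density `r_{γ(w)}(y)` with respect to `μ × ν`. -/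
def jointOf {W Y : Type*} [MeasurableSpace W] [MeasurableSpace Y] {ν : Measure Y} {I : Set ℝ}
    (E : ExpFamily ν I) (μ : Measure W) (γ : W → ℝ) : Measure (W × Y) :=
  (μ.prod ν).withDensity fun p => ENNReal.ofReal (E.r (γ p.1) p.2)

/-- Pseudo-Hellinger distance between two product distributions, `h²(P,P') = Σᵢ h²(Pᵢ,Pᵢ')`. -/
def prodHellingerSq {Z : Type*} [MeasurableSpace Z] {n : ℕ} (P P' : Fin n → Measure Z) : ℝ :=
  ∑ i, hellingerSq (P i) (P' i)

end


section AuxStatement13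


lemma abs_psi_le_one {x : ℝ} (hx : 0 ≤ x) : |psi x| ≤ 1 := by
  rw [psi, abs_div, div_le_one (by positivity : (0:ℝ) < |x + 1|)]
  rw [abs_of_nonneg (by linarith : (0:ℝ) ≤ x + 1)]
  rw [abs_le]; constructor <;> linarith

lemma psi_div_eq {a b : ℝ} (ha : 0 < a) (hb : 0 ≤ b) : psi (b / a) = (b - a) / (a + b) := by
  have h2 : (0:ℝ) < b / a + 1 := by positivity
  rw [psi, div_eq_div_iff h2.ne' (by positivity : (0:ℝ) < a + b).ne',
    div_sub_one ha.ne', div_add_one ha.ne', div_mul_eq_mul_div, mul_div_assoc]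
  ring_nf

lemma pointwise_key {r1 r2 s c : ℝ} (hr1 : 0 < r1) (hr2 : 0 < r2) (hs : 0 ≤ s) (hc : 0 ≤ c) :
    s * psi (Real.sqrt (r2 / r1)) ≤
      2 * (Real.sqrt s - Real.sqrt (r1 * c)) ^ 2
      - (3 / 16) * (Real.sqrt s - Real.sqrt (r2 * c)) ^ 2 + (1 / 4) * (r2 * c - r1 * c) := by
  rcases hc.eq_or_lt with rfl | hc
  · simp only [mul_zero, Real.sqrt_zero, sub_zero, sub_self, mul_zero, add_zero]
    have h1 : s * psi (Real.sqrt (r2 / r1)) ≤ s := by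
      calc s * psi (Real.sqrt (r2 / r1)) ≤ s * |psi (Real.sqrt (r2 / r1))| :=
            mul_le_mul_of_nonneg_left (le_abs_self _) hs
        _ ≤ s * 1 := mul_le_mul_of_nonneg_left (abs_psi_le_one (Real.sqrt_nonneg _)) hs
        _ = s := mul_one s
    have h2 : Real.sqrt s ^ 2 = s := Real.sq_sqrt hs
    nlinarith [Real.sqrt_nonneg s]
  · set a := Real.sqrt (r1 * c) with hadef
    set b := Real.sqrt (r2 * c) with hbdef
    set z := Real.sqrt s with hzdef
    have ha : 0 < a := Real.sqrt_pos.2 (by positivity)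
    have hb : 0 < b := Real.sqrt_pos.2 (by positivity)
    have hz : 0 ≤ z := Real.sqrt_nonneg _
    have ha2 : a ^ 2 = r1 * c := Real.sq_sqrt (by positivity)
    have hb2 : b ^ 2 = r2 * c := Real.sq_sqrt (by positivity)
    have hz2 : z ^ 2 = s := Real.sq_sqrt hs
    have hratio : Real.sqrt (r2 / r1) = b / a := by
      rw [hadef, hbdef, ← Real.sqrt_div (by positivity : (0:ℝ) ≤ r2 * c)]
      congr 1
      field_simp
    rw [hratio, psi_div_eq ha hb.le, ← hz2, ← ha2, ← hb2]
    rw [mul_div_assoc', div_le_iff₀ (by linarith : (0:ℝ) < a + b)]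
    nlinarith [mul_nonneg ha.le (sq_nonneg (a-z)), mul_nonneg hb.le (sq_nonneg (a-z)),
      mul_nonneg hz (sq_nonneg (a-z)), mul_nonneg ha.le (sq_nonneg (b-z)),
      mul_nonneg hb.le (sq_nonneg (b-z)), mul_nonneg hz (sq_nonneg (b-z)),
      mul_nonneg ha.le (sq_nonneg (a-b)), mul_nonneg hb.le (sq_nonneg (a-b)),
      mul_nonneg hz (sq_nonneg (a-b)), mul_nonneg ha.le (sq_nonneg (a+b-2*z)),
      mul_nonneg hb.le (sq_nonneg (a+b-2*z)), mul_nonneg hz (sq_nonneg (a+b-2*z)),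
      mul_nonneg (mul_nonneg ha.le hb.le) hz, sq_nonneg (a+b-2*z)]

namespace ExpFamily
variable {Y : Type*} [MeasurableSpace Y] {ν : Measure Y} {I : Set ℝ}

lemma r_pos (E : ExpFamily ν I) (γ : ℝ) (y : Y) : 0 < E.r γ y := Real.exp_pos _

lemma measurable_u_comp (E : ExpFamily ν I) {W : Type*} [MeasurableSpace W]
    {γ : W → ℝ} (hγm : Measurable γ) (hγ : ∀ w, γ w ∈ I) :
    Measurable fun w => E.u (γ w) := by
  have hres : Continuous (I.restrict E.u) := E.cont_u.restrict
  have hγ' : Measurable (fun w => (⟨γ w, hγ w⟩ : I)) := hγm.subtype_mk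
  exact hres.measurable.comp hγ'

lemma lintegral_exp_eq (E : ExpFamily ν I) {γ0 : ℝ} (hγ0 : γ0 ∈ I) :
    ∫⁻ y, ENNReal.ofReal (Real.exp (E.u γ0 * E.T y)) ∂ν
      = ENNReal.ofReal (Real.exp (E.A γ0)) := by
  have hspec := E.A_spec γ0 hγ0
  have hint : Integrable (fun y => Real.exp (E.u γ0 * E.T y)) ν := by
    by_contra h
    rw [integral_undef h] at hspec
    exact (Real.exp_pos _).ne' hspec
  rw [← ofReal_integral_eq_lintegral_ofReal hint
    (Filter.Eventually.of_forall fun y => (Real.exp_pos _).le), ← hspec]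

lemma lintegral_r_eq_one (E : ExpFamily ν I) {γ0 : ℝ} (hγ0 : γ0 ∈ I) :
    ∫⁻ y, ENNReal.ofReal (E.r γ0 y) ∂ν = 1 := by
  have hmeas : Measurable fun y => ENNReal.ofReal (Real.exp (E.u γ0 * E.T y)) :=
    ((measurable_const.mul E.meas_T).exp).ennreal_ofReal
  have : ∀ y, ENNReal.ofReal (E.r γ0 y)
      = ENNReal.ofReal (Real.exp (-E.A γ0)) * ENNReal.ofReal (Real.exp (E.u γ0 * E.T y)) := by
    intro y
    rw [← ENNReal.ofReal_mul (Real.exp_pos _).le, ← Real.exp_add, r]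
    ring_nf
  simp_rw [this]
  rw [lintegral_const_mul _ hmeas, E.lintegral_exp_eq hγ0,
    ← ENNReal.ofReal_mul (Real.exp_pos _).le, ← Real.exp_add]
  simp

-- measurability of A ∘ γ
lemma measurable_A_comp (E : ExpFamily ν I) [SigmaFinite ν] {W : Type*} [MeasurableSpace W]
    {γ : W → ℝ} (hγm : Measurable γ) (hγ : ∀ w, γ w ∈ I) :
    Measurable fun w => E.A (γ w) := by
  set φ : ℝ → ℝ≥0∞ := fun t => ∫⁻ y, ENNReal.ofReal (Real.exp (t * E.T y)) ∂ν with hφ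
  have hφm : Measurable φ := by
    have h : Measurable (fun p : ℝ × Y => ENNReal.ofReal (Real.exp (p.1 * E.T p.2))) :=
      ((measurable_fst.mul (E.meas_T.comp measurable_snd)).exp).ennreal_ofReal
    exact h.lintegral_prod_right'
  have key : ∀ w, E.A (γ w) = Real.log ((φ (E.u (γ w))).toReal) := by
    intro w
    have h1 : φ (E.u (γ w)) = ENNReal.ofReal (Real.exp (E.A (γ w))) :=
      E.lintegral_exp_eq (hγ w)
    rw [h1, ENNReal.toReal_ofReal (Real.exp_pos _).le, Real.log_exp]
  simp_rw [key]
  exact Real.measurable_log.comp (hφm.ennreal_toReal.comp (E.measurable_u_comp hγm hγ))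

lemma measurable_r_comp (E : ExpFamily ν I) [SigmaFinite ν] {W : Type*} [MeasurableSpace W]
    {γ : W → ℝ} (hγm : Measurable γ) (hγ : ∀ w, γ w ∈ I) :
    Measurable fun p : W × Y => E.r (γ p.1) p.2 := by
  apply Measurable.exp
  exact (((E.measurable_u_comp hγm hγ).comp measurable_fst).mul
    (E.meas_T.comp measurable_snd)).sub ((E.measurable_A_comp hγm hγ).comp measurable_fst)

end ExpFamily


lemma hellingerSq_eq_of_ac {Z : Type*} [MeasurableSpace Z] (S P m : Measure Z)
    [IsFiniteMeasure S] [IsFiniteMeasure P] [IsFiniteMeasure m]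
    (hS : S ≪ m) (hP : P ≪ m) :
    hellingerSq S P = (1 / 2) * ∫ z, (Real.sqrt ((S.rnDeriv m) z).toReal
      - Real.sqrt ((P.rnDeriv m) z).toReal) ^ 2 ∂m := by
  have hSν : S ≪ S + P := Measure.absolutelyContinuous_of_le (Measure.le_add_right le_rfl)
  have hPν : P ≪ S + P := Measure.absolutelyContinuous_of_le (Measure.le_add_left le_rfl)
  have hνm : S + P ≪ m := by
    refine Measure.AbsolutelyContinuous.mk fun s hs h0 => ?_
    simp [Measure.add_apply, hS h0, hP h0]
  have h1 : S.rnDeriv (S + P) * (S + P).rnDeriv m =ᵐ[m] S.rnDeriv m :=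
    Measure.rnDeriv_mul_rnDeriv hSν
  have h2 : P.rnDeriv (S + P) * (S + P).rnDeriv m =ᵐ[m] P.rnDeriv m :=
    Measure.rnDeriv_mul_rnDeriv hPν
  have key : ∫ z, (Real.sqrt ((S.rnDeriv m) z).toReal
      - Real.sqrt ((P.rnDeriv m) z).toReal) ^ 2 ∂m
      = ∫ z, (Real.sqrt ((S.rnDeriv (S + P)) z).toReal
      - Real.sqrt ((P.rnDeriv (S + P)) z).toReal) ^ 2 ∂(S + P) := by
    rw [← integral_rnDeriv_smul hνm]
    refine integral_congr_ae ?_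
    filter_upwards [h1, h2] with z hz1 hz2
    rw [← hz1, ← hz2]
    simp only [Pi.mul_apply, ENNReal.toReal_mul, smul_eq_mul]
    rw [Real.sqrt_mul ENNReal.toReal_nonneg, Real.sqrt_mul ENNReal.toReal_nonneg,
      ← sub_mul, mul_pow, Real.sq_sqrt ENNReal.toReal_nonneg]
    ring
  rw [hellingerSq, key]

lemma measurable_psi_sqrt_div {Z : Type*} [MeasurableSpace Z] {r1 r2 : Z → ℝ}
    (h1 : Measurable r1) (h2 : Measurable r2) :
    Measurable fun z => psi (Real.sqrt (r2 z / r1 z)) := by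
  have : Measurable fun z => Real.sqrt (r2 z / r1 z) :=
    Real.continuous_sqrt.measurable.comp (h2.div h1)
  exact ((this.sub measurable_const).div (this.add measurable_const))

theorem core_bound {Z : Type*} [MeasurableSpace Z] (S P Q lam : Measure Z)
    [IsProbabilityMeasure S] [IsProbabilityMeasure P] [IsProbabilityMeasure Q]
    [SigmaFinite lam] (r1 r2 : Z → ℝ)
    (h1 : Measurable r1) (h2 : Measurable r2)
    (hr1 : ∀ z, 0 < r1 z) (hr2 : ∀ z, 0 < r2 z)
    (hP : P = lam.withDensity fun z => ENNReal.ofReal (r1 z))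
    (hQ : Q = lam.withDensity fun z => ENNReal.ofReal (r2 z)) :
    ∫ z, psi (Real.sqrt (r2 z / r1 z)) ∂S ≤
      4 * hellingerSq S P - (3 / 8) * hellingerSq S Q := by
  set m : Measure Z := S + P + Q with hm
  have hSm : S ≪ m := Measure.absolutelyContinuous_of_le
    ((Measure.le_add_right le_rfl).trans (Measure.le_add_right le_rfl))
  have hPm : P ≪ m := Measure.absolutelyContinuous_of_le
    ((Measure.le_add_left le_rfl).trans (Measure.le_add_right le_rfl))
  have hQm : Q ≪ m := Measure.absolutelyContinuous_of_le (Measure.le_add_left le_rfl)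
  -- real densities
  set s : Z → ℝ := fun z => ((S.rnDeriv m) z).toReal with hs
  set p : Z → ℝ := fun z => ((P.rnDeriv m) z).toReal with hp
  set q : Z → ℝ := fun z => ((Q.rnDeriv m) z).toReal with hq
  set c : Z → ℝ := fun z => ((lam.rnDeriv m) z).toReal with hc
  have hms : Measurable s := (Measure.measurable_rnDeriv S m).ennreal_toReal
  have hmp : Measurable p := (Measure.measurable_rnDeriv P m).ennreal_toReal
  have hmq : Measurable q := (Measure.measurable_rnDeriv Q m).ennreal_toReal
  have hpc : p =ᵐ[m] fun z => r1 z * c z := by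
    have := Measure.rnDeriv_withDensity_left (μ := lam) (ν := m)
      (f := fun z => ENNReal.ofReal (r1 z))
      (h1.ennreal_ofReal).aemeasurable (Filter.Eventually.of_forall fun z => ENNReal.ofReal_ne_top)
    rw [hp, hP]
    filter_upwards [this] with z hz
    rw [hz, ENNReal.toReal_mul, ENNReal.toReal_ofReal (hr1 z).le]
  have hqc : q =ᵐ[m] fun z => r2 z * c z := by
    have := Measure.rnDeriv_withDensity_left (μ := lam) (ν := m)
      (f := fun z => ENNReal.ofReal (r2 z))
      (h2.ennreal_ofReal).aemeasurable (Filter.Eventually.of_forall fun z => ENNReal.ofReal_ne_top)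
    rw [hq, hQ]
    filter_upwards [this] with z hz
    rw [hz, ENNReal.toReal_mul, ENNReal.toReal_ofReal (hr2 z).le]
  -- pointwise a.e. inequality
  have hae : (fun z => s z * psi (Real.sqrt (r2 z / r1 z))) ≤ᵐ[m]
      fun z => 2 * (Real.sqrt (s z) - Real.sqrt (p z)) ^ 2
        - (3 / 16) * (Real.sqrt (s z) - Real.sqrt (q z)) ^ 2 + (1 / 4) * (q z - p z) := by
    filter_upwards [hpc, hqc] with z hz1 hz2
    rw [hz1, hz2]
    exact pointwise_key (hr1 z) (hr2 z) ENNReal.toReal_nonneg ENNReal.toReal_nonneg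
  -- integrability
  have ints : Integrable s m := Measure.integrable_toReal_rnDeriv
  have intp : Integrable p m := Measure.integrable_toReal_rnDeriv
  have intq : Integrable q m := Measure.integrable_toReal_rnDeriv
  have intLHS : Integrable (fun z => s z * psi (Real.sqrt (r2 z / r1 z))) m := by
    refine Integrable.mono' ints
      ((hms.mul (measurable_psi_sqrt_div h1 h2)).aestronglyMeasurable) ?_
    refine Filter.Eventually.of_forall fun z => ?_
    rw [Real.norm_eq_abs, abs_mul, abs_of_nonneg ENNReal.toReal_nonneg]
    calc s z * |psi (Real.sqrt (r2 z / r1 z))| ≤ s z * 1 :=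
          mul_le_mul_of_nonneg_left (abs_psi_le_one (Real.sqrt_nonneg _)) ENNReal.toReal_nonneg
      _ = s z := mul_one _
  have sqint : ∀ (f g : Z → ℝ), Measurable f → Measurable g → Integrable f m → Integrable g m
      → (∀ z, 0 ≤ f z) → (∀ z, 0 ≤ g z) →
      Integrable (fun z => (Real.sqrt (f z) - Real.sqrt (g z)) ^ 2) m := by
    intro f g hf hg hif hig hf0 hg0
    refine Integrable.mono' ((hif.add hig).const_mul 2)
      ((((Real.continuous_sqrt.measurable.comp hf).sub
        (Real.continuous_sqrt.measurable.comp hg)).pow_const 2).aestronglyMeasurable) ?_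
    refine Filter.Eventually.of_forall fun z => ?_
    rw [Real.norm_eq_abs, abs_of_nonneg (sq_nonneg _), Pi.add_apply]
    nlinarith [sq_nonneg (Real.sqrt (f z) + Real.sqrt (g z)), Real.sq_sqrt (hf0 z),
      Real.sq_sqrt (hg0 z)]
  have intsq1 : Integrable (fun z => (Real.sqrt (s z) - Real.sqrt (p z)) ^ 2) m :=
    sqint s p hms hmp ints intp (fun _ => ENNReal.toReal_nonneg) (fun _ => ENNReal.toReal_nonneg)
  have intsq2 : Integrable (fun z => (Real.sqrt (s z) - Real.sqrt (q z)) ^ 2) m :=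
    sqint s q hms hmq ints intq (fun _ => ENNReal.toReal_nonneg) (fun _ => ENNReal.toReal_nonneg)
  have intRHS : Integrable (fun z => 2 * (Real.sqrt (s z) - Real.sqrt (p z)) ^ 2
        - (3 / 16) * (Real.sqrt (s z) - Real.sqrt (q z)) ^ 2 + (1 / 4) * (q z - p z)) m := by
    exact ((intsq1.const_mul 2).sub (intsq2.const_mul (3/16))).add ((intq.sub intp).const_mul (1/4))
  -- integrate
  have hmono := integral_mono_ae intLHS intRHS hae
  have hLHS : ∫ z, s z * psi (Real.sqrt (r2 z / r1 z)) ∂m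
      = ∫ z, psi (Real.sqrt (r2 z / r1 z)) ∂S := by
    rw [← integral_rnDeriv_smul hSm]
    simp [smul_eq_mul, hs]
  have hint_p : ∫ z, p z ∂m = 1 := by
    rw [hp, Measure.integral_toReal_rnDeriv hPm]
    simp
  have hint_q : ∫ z, q z ∂m = 1 := by
    rw [hq, Measure.integral_toReal_rnDeriv hQm]
    simp
  have hH1 : ∫ z, (Real.sqrt (s z) - Real.sqrt (p z)) ^ 2 ∂m = 2 * hellingerSq S P := by
    rw [hellingerSq_eq_of_ac S P m hSm hPm]; ring
  have hH2 : ∫ z, (Real.sqrt (s z) - Real.sqrt (q z)) ^ 2 ∂m = 2 * hellingerSq S Q := by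
    rw [hellingerSq_eq_of_ac S Q m hSm hQm]; ring
  have hRHS : ∫ z, (2 * (Real.sqrt (s z) - Real.sqrt (p z)) ^ 2
        - (3 / 16) * (Real.sqrt (s z) - Real.sqrt (q z)) ^ 2 + (1 / 4) * (q z - p z)) ∂m
      = 4 * hellingerSq S P - (3 / 8) * hellingerSq S Q := by
    have i2 : Integrable (fun z => (1:ℝ)/4 * (q z - p z)) m := by
      exact (intq.sub intp).const_mul (1/4)
    have i3 : Integrable (fun z => 2 * (Real.sqrt (s z) - Real.sqrt (p z)) ^ 2) m := by
      exact intsq1.const_mul 2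
    have i4 : Integrable (fun z => (3:ℝ)/16 * (Real.sqrt (s z) - Real.sqrt (q z)) ^ 2) m := by
      exact intsq2.const_mul (3/16)
    have i1 : Integrable (fun z => 2 * (Real.sqrt (s z) - Real.sqrt (p z)) ^ 2
        - (3:ℝ)/16 * (Real.sqrt (s z) - Real.sqrt (q z)) ^ 2) m := i3.sub i4
    rw [integral_add i1 i2, integral_sub i3 i4,
      integral_const_mul, integral_const_mul, integral_const_mul,
      integral_sub intq intp, hint_p, hint_q, hH1, hH2]
    ring
  rw [hLHS] at hmono
  rw [hRHS] at hmono
  exact hmono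

lemma jointOf_isProb {W Y : Type*} [MeasurableSpace W] [MeasurableSpace Y] {ν : Measure Y}
    [SigmaFinite ν] {I : Set ℝ} (E : ExpFamily ν I) (μ : Measure W) [IsProbabilityMeasure μ]
    {γ : W → ℝ} (hγm : Measurable γ) (hγ : ∀ w, γ w ∈ I) :
    IsProbabilityMeasure (jointOf E μ γ) := by
  constructor
  rw [jointOf, withDensity_apply _ MeasurableSet.univ, setLIntegral_univ]
  rw [lintegral_prod _ ((E.measurable_r_comp hγm hγ).ennreal_ofReal).aemeasurable]
  have : ∀ w, ∫⁻ y, ENNReal.ofReal (E.r (γ w) y) ∂ν = 1 := fun w =>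
    E.lintegral_r_eq_one (hγ w)
  simp_rw [this]
  simp

lemma map_eval_pi' {ι : Type*} [Fintype ι] {α : ι → Type*} [∀ i, MeasurableSpace (α i)]
    (μ : ∀ i, Measure (α i)) [∀ i, IsProbabilityMeasure (μ i)] (i : ι) :
    (Measure.pi μ).map (Function.eval i) = μ i := by
  classical
  refine Measure.ext fun s hs => ?_
  rw [Measure.map_apply (measurable_pi_apply i) hs, Set.eval_preimage,
    Measure.pi_pi]
  rw [Finset.prod_eq_single i (fun j _ hj => by simp [Function.update_of_ne hj])
    (fun h => absurd (Finset.mem_univ i) h)]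
  simp

lemma integral_eval_pi {ι : Type*} [Fintype ι] {α : ι → Type*} [∀ i, MeasurableSpace (α i)]
    (μ : ∀ i, Measure (α i)) [∀ i, IsProbabilityMeasure (μ i)] (i : ι)
    {f : α i → ℝ} (hf : Measurable f) :
    ∫ ω, f (ω i) ∂(Measure.pi μ) = ∫ x, f x ∂(μ i) := by
  rw [← map_eval_pi' μ i, integral_map (measurable_pi_apply i).aemeasurable]
  rw [map_eval_pi' μ i]
  exact hf.aestronglyMeasurable


theorem statement13_core {W Y : Type} [MeasurableSpace W] [MeasurableSpace Y]
    (ν : Measure Y) [SigmaFinite ν] (I : Set ℝ) (E : ExpFamily ν I)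
    (μ : Measure W) [IsProbabilityMeasure μ] (S : Measure (W × Y)) [IsProbabilityMeasure S]
    (γ1 γ2 : W → ℝ) (hγ1m : Measurable γ1) (hγ2m : Measurable γ2)
    (hγ1 : ∀ w, γ1 w ∈ I) (hγ2 : ∀ w, γ2 w ∈ I) :
    ∫ p : W × Y, psi (Real.sqrt (E.r (γ2 p.1) p.2 / E.r (γ1 p.1) p.2)) ∂S ≤
      4 * hellingerSq S (jointOf E μ γ1) - (3 / 8) * hellingerSq S (jointOf E μ γ2) := by
  haveI := jointOf_isProb E μ hγ1m hγ1
  haveI := jointOf_isProb E μ hγ2m hγ2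
  exact core_bound S (jointOf E μ γ1) (jointOf E μ γ2) (μ.prod ν)
    (fun p : W × Y => E.r (γ1 p.1) p.2) (fun p : W × Y => E.r (γ2 p.1) p.2)
    (E.measurable_r_comp hγ1m hγ1) (E.measurable_r_comp hγ2m hγ2)
    (fun p => E.r_pos _ _) (fun p => E.r_pos _ _) rfl rfl

end AuxStatement13

/-- **Expectation bound for the `T`-statistic ((10) of Baraud–Birgé 2018 with `a₀ = 4`,
`a₁ = 3/8`).** For all measurable `γ1, γ2 : W → I` and any true distribution
`P* = ⊗ᵢ Pᵢ*` of the independent data, `E[T(X,γ1,γ2)] ≤ 4 h²(P*,P_{γ1}) - (3/8) h²(P*,P_{γ2})`. -/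
theorem statement13 (W Y : Type) [MeasurableSpace W] [MeasurableSpace Y]
    (ν : Measure Y) [SigmaFinite ν] (I : Set ℝ) (E : ExpFamily ν I) (n : ℕ)
    (μW : Fin n → Measure W) [∀ i, IsProbabilityMeasure (μW i)]
    (Rstar : Fin n → Kernel W Y) [∀ i, IsMarkovKernel (Rstar i)]
    (γ1 γ2 : W → ℝ) (hγ1m : Measurable γ1) (hγ2m : Measurable γ2)
    (hγ1 : ∀ w, γ1 w ∈ I) (hγ2 : ∀ w, γ2 w ∈ I) :
    ∫ ω, Tstat E γ1 γ2 ω ∂(Measure.pi fun i => (μW i).compProd (Rstar i)) ≤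
      4 * prodHellingerSq (fun i => (μW i).compProd (Rstar i))
          (fun i => jointOf E (μW i) γ1)
      - (3 / 8) * prodHellingerSq (fun i => (μW i).compProd (Rstar i))
          (fun i => jointOf E (μW i) γ2) := by
  set f : W × Y → ℝ := fun p => psi (Real.sqrt (E.r (γ2 p.1) p.2 / E.r (γ1 p.1) p.2)) with hf
  have hfm : Measurable f := measurable_psi_sqrt_div
    (E.measurable_r_comp hγ1m hγ1) (E.measurable_r_comp hγ2m hγ2)
  have hint : ∀ i : Fin n, Integrable (fun ω : Fin n → W × Y => f (ω i))
      (Measure.pi fun i => (μW i).compProd (Rstar i)) := by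
    intro i
    refine Integrable.mono' (integrable_const 1)
      ((hfm.comp (measurable_pi_apply i)).aestronglyMeasurable) ?_
    refine Filter.Eventually.of_forall fun ω => ?_
    rw [Real.norm_eq_abs]
    exact abs_psi_le_one (Real.sqrt_nonneg _)
  have hsum : ∫ ω, Tstat E γ1 γ2 ω ∂(Measure.pi fun i => (μW i).compProd (Rstar i))
      = ∑ i, ∫ p : W × Y, f p ∂((μW i).compProd (Rstar i)) := by
    have : ∀ ω : Fin n → W × Y, Tstat E γ1 γ2 ω = ∑ i, f (ω i) := fun ω => rfl
    simp_rw [this]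
    rw [integral_finset_sum _ (fun i _ => hint i)]
    exact Finset.sum_congr rfl fun i _ =>
      integral_eval_pi (fun i => (μW i).compProd (Rstar i)) i hfm
  rw [hsum, prodHellingerSq, prodHellingerSq, Finset.mul_sum, Finset.mul_sum,
    ← Finset.sum_sub_distrib]
  refine Finset.sum_le_sum fun i _ => ?_
  exact statement13_core ν I E (μW i) ((μW i).compProd (Rstar i)) γ1 γ2 hγ1m hγ2m hγ1 hγ2
end

section
/- For all measurable γ1, γ2 : W → I and any true distribution P* = ⊗_{i=1}^n P_i* of the independent data X₁,…,Xₙ, the second moments of the ψ-statistics satisfy Σ_{i=1}^n E[ ψ²(√(r_{γ2(W_i)}(Y_i)/r_{γ1(W_i)}(Y_i))) ] ≤ 3√2 · ( h²(P*, P_{γ1}) + h²(P*, P_{γ2}) ). In particular, if h²(P*, P_{γ1}) + h²(P*, P_{γ2}) < y² for some y > 0, then Σ_{i=1}^n E[ψ²(·)] ≤ 3√2 y². -/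
open MeasureTheory ProbabilityTheory Real
open scoped ENNReal NNReal BigOperators

noncomputable section AuxStatement14

open MeasureTheory

/-- Core pointwise inequality (Cauchy–Schwarz): `t²z² ≤ (t-a)² + (t-b)²` whenever
`z = (b-a)/(a+b)` (if `a+b>0`) and `z² ≤ 1`. -/
lemma bb_core (t a b z : ℝ) (ht : 0 ≤ t) (ha : 0 ≤ a) (hb : 0 ≤ b)
    (hz1 : z ^ 2 ≤ 1) (hz : 0 < a + b → z = (b - a) / (a + b)) :
    t ^ 2 * z ^ 2 ≤ (t - a) ^ 2 + (t - b) ^ 2 := by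
  rcases (add_nonneg ha hb).lt_or_eq with hpos | h0
  · rw [hz hpos, div_pow, mul_div_assoc', div_le_iff₀ (by positivity)]
    nlinarith [sq_nonneg (a * (t - a) + b * (t - b)),
      mul_nonneg (mul_nonneg ha hb) (sq_nonneg (t - a)),
      mul_nonneg (mul_nonneg ha hb) (sq_nonneg (t - b))]
  · have ha0 : a = 0 := by linarith
    have hb0 : b = 0 := by linarith
    subst ha0; subst hb0
    nlinarith [sq_nonneg t]

lemma bb_psi_sq_le_one {x : ℝ} (hx : 0 ≤ x) : psi x ^ 2 ≤ 1 := by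
  rw [psi, div_pow, div_le_one (by positivity)]
  nlinarith

lemma bb_two_le : (2 : ℝ) ≤ 3 * Real.sqrt 2 := by
  nlinarith [Real.sq_sqrt (show (0:ℝ) ≤ 2 by norm_num), Real.sqrt_nonneg 2]

lemma bb_hellingerSq_nonneg {α : Type*} [MeasurableSpace α] (P Q : Measure α) :
    0 ≤ hellingerSq P Q := by
  refine mul_nonneg (by norm_num) (integral_nonneg fun x => sq_nonneg _)

lemma bb_integrable_sq_sub_sqrt {α : Type*} [MeasurableSpace α]
    (P Q μ : Measure α) [IsFiniteMeasure P] [IsFiniteMeasure Q] :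
    Integrable (fun x =>
      (Real.sqrt (P.rnDeriv μ x).toReal - Real.sqrt (Q.rnDeriv μ x).toReal) ^ 2) μ := by
  have hP : Integrable (fun x => (P.rnDeriv μ x).toReal) μ :=
    Measure.integrable_toReal_rnDeriv
  have hQ : Integrable (fun x => (Q.rnDeriv μ x).toReal) μ :=
    Measure.integrable_toReal_rnDeriv
  refine Integrable.mono ((hP.add hQ).const_mul 2) ?_ ?_
  · exact (((Measure.measurable_rnDeriv P μ).ennreal_toReal.sqrt.sub
      (Measure.measurable_rnDeriv Q μ).ennreal_toReal.sqrt).pow_const 2).aestronglyMeasurable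
  · refine Filter.Eventually.of_forall fun x => ?_
    have h1 : (0:ℝ) ≤ (P.rnDeriv μ x).toReal := ENNReal.toReal_nonneg
    have h2 : (0:ℝ) ≤ (Q.rnDeriv μ x).toReal := ENNReal.toReal_nonneg
    have s1 := Real.sq_sqrt h1
    have s2 := Real.sq_sqrt h2
    simp only [Pi.add_apply, Real.norm_eq_abs]
    rw [abs_of_nonneg (sq_nonneg _), abs_of_nonneg (by positivity)]
    nlinarith [sq_nonneg (Real.sqrt (P.rnDeriv μ x).toReal + Real.sqrt (Q.rnDeriv μ x).toReal)]

/-- The Hellinger distance can be computed with any dominating measure. -/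
lemma bb_hellingerSq_eq {α : Type*} [MeasurableSpace α] (P Q μ : Measure α)
    [IsFiniteMeasure P] [IsFiniteMeasure Q] [SigmaFinite μ] (hP : P ≪ μ) (hQ : Q ≪ μ) :
    hellingerSq P Q = (1/2) *
      ∫ x, (Real.sqrt (P.rnDeriv μ x).toReal - Real.sqrt (Q.rnDeriv μ x).toReal) ^ 2 ∂μ := by
  have hρ : P + Q ≪ μ := Measure.AbsolutelyContinuous.add_left hP hQ
  have hPρ : P ≪ P + Q := Measure.absolutelyContinuous_of_le (Measure.le_add_right le_rfl)
  have hQρ : Q ≪ P + Q := Measure.absolutelyContinuous_of_le (Measure.le_add_left le_rfl)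
  rw [hellingerSq]
  congr 1
  rw [← MeasureTheory.integral_rnDeriv_smul hρ]
  refine integral_congr_ae ?_
  have h1 := Measure.rnDeriv_mul_rnDeriv (κ := μ) hPρ
  have h2 := Measure.rnDeriv_mul_rnDeriv (κ := μ) hQρ
  filter_upwards [h1, h2] with x hx1 hx2
  have hc : (0:ℝ) ≤ ((P + Q).rnDeriv μ x).toReal := ENNReal.toReal_nonneg
  rw [smul_eq_mul, ← hx1, ← hx2, Pi.mul_apply, Pi.mul_apply, ENNReal.toReal_mul,
    ENNReal.toReal_mul, Real.sqrt_mul ENNReal.toReal_nonneg, Real.sqrt_mul ENNReal.toReal_nonneg]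
  have hs := Real.sq_sqrt hc
  linear_combination (-(Real.sqrt ((P.rnDeriv (P + Q)) x).toReal
      - Real.sqrt ((Q.rnDeriv (P + Q)) x).toReal) ^ 2) * hs

/-- The central single-measure inequality. -/
lemma bb_key_single {W Y : Type*} [MeasurableSpace W] [MeasurableSpace Y]
    (S P1 P2 base : Measure (W × Y)) [IsFiniteMeasure S] [IsFiniteMeasure P1]
    [IsFiniteMeasure P2] [SigmaFinite base]
    (r1 r2 : W × Y → ℝ) (hr1m : Measurable r1) (hr2m : Measurable r2)
    (hr1 : ∀ x, 0 < r1 x) (hr2 : ∀ x, 0 < r2 x)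
    (hP1 : P1 = base.withDensity fun x => ENNReal.ofReal (r1 x))
    (hP2 : P2 = base.withDensity fun x => ENNReal.ofReal (r2 x)) :
    ∫ x, psi (Real.sqrt (r2 x / r1 x)) ^ 2 ∂S
      ≤ 3 * Real.sqrt 2 * (hellingerSq S P1 + hellingerSq S P2) := by
  set μt : Measure (W × Y) := S + P1 + P2 with hμt
  haveI : IsFiniteMeasure μt := by rw [hμt]; infer_instance
  have hSle : S ≪ μt := Measure.absolutelyContinuous_of_le
    (le_trans (Measure.le_add_right le_rfl) (Measure.le_add_right le_rfl))
  have hP1le : P1 ≪ μt := Measure.absolutelyContinuous_of_le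
    (le_trans (Measure.le_add_left le_rfl) (Measure.le_add_right le_rfl))
  have hP2le : P2 ≪ μt := Measure.absolutelyContinuous_of_le (Measure.le_add_left le_rfl)
  -- densities of P1, P2 w.r.t. μt
  have hp1 : P1.rnDeriv μt =ᵐ[μt] fun x => ENNReal.ofReal (r1 x) * base.rnDeriv μt x := by
    rw [hP1]
    exact Measure.rnDeriv_withDensity_left
      (hr1m.ennreal_ofReal).aemeasurable
      (Filter.Eventually.of_forall fun x => ENNReal.ofReal_ne_top)
  have hp2 : P2.rnDeriv μt =ᵐ[μt] fun x => ENNReal.ofReal (r2 x) * base.rnDeriv μt x := by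
    rw [hP2]
    exact Measure.rnDeriv_withDensity_left
      (hr2m.ennreal_ofReal).aemeasurable
      (Filter.Eventually.of_forall fun x => ENNReal.ofReal_ne_top)
  -- measurability of the psi-integrand
  have hpsim : Measurable fun x => psi (Real.sqrt (r2 x / r1 x)) := by
    have : Measurable fun x => Real.sqrt (r2 x / r1 x) := (hr2m.div hr1m).sqrt
    exact ((this.sub_const 1).div (this.add_const 1))
  have hpsi_le : ∀ x, psi (Real.sqrt (r2 x / r1 x)) ^ 2 ≤ 1 :=
    fun x => bb_psi_sq_le_one (Real.sqrt_nonneg _)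
  -- rewrite the left-hand side
  have hL : ∫ x, psi (Real.sqrt (r2 x / r1 x)) ^ 2 ∂S
      = ∫ x, (S.rnDeriv μt x).toReal * psi (Real.sqrt (r2 x / r1 x)) ^ 2 ∂μt := by
    rw [← MeasureTheory.integral_rnDeriv_smul hSle]
    simp [smul_eq_mul]
  -- integrability
  have hInt1 : Integrable
      (fun x => (S.rnDeriv μt x).toReal * psi (Real.sqrt (r2 x / r1 x)) ^ 2) μt := by
    refine Integrable.mono (Measure.integrable_toReal_rnDeriv (μ := S) (ν := μt)) ?_ ?_
    · exact ((Measure.measurable_rnDeriv S μt).ennreal_toReal.mul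
        (hpsim.pow_const 2)).aestronglyMeasurable
    · refine Filter.Eventually.of_forall fun x => ?_
      rw [Real.norm_eq_abs, Real.norm_eq_abs,
        abs_of_nonneg (mul_nonneg ENNReal.toReal_nonneg (sq_nonneg _)),
        abs_of_nonneg ENNReal.toReal_nonneg]
      nlinarith [hpsi_le x, ENNReal.toReal_nonneg (a := S.rnDeriv μt x), sq_nonneg (psi (Real.sqrt (r2 x / r1 x)))]
  have hI1 := bb_integrable_sq_sub_sqrt S P1 μt
  have hI2 := bb_integrable_sq_sub_sqrt S P2 μt
  -- the pointwise a.e. bound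
  have hae : (fun x => (S.rnDeriv μt x).toReal * psi (Real.sqrt (r2 x / r1 x)) ^ 2)
      ≤ᵐ[μt] fun x =>
        (Real.sqrt (S.rnDeriv μt x).toReal - Real.sqrt (P1.rnDeriv μt x).toReal) ^ 2
        + (Real.sqrt (S.rnDeriv μt x).toReal - Real.sqrt (P2.rnDeriv μt x).toReal) ^ 2 := by
    filter_upwards [hp1, hp2] with x h1 h2
    have hgr : (0:ℝ) ≤ (base.rnDeriv μt x).toReal := ENNReal.toReal_nonneg
    have e1 : (P1.rnDeriv μt x).toReal = r1 x * (base.rnDeriv μt x).toReal := by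
      rw [h1, ENNReal.toReal_mul, ENNReal.toReal_ofReal (hr1 x).le]
    have e2 : (P2.rnDeriv μt x).toReal = r2 x * (base.rnDeriv μt x).toReal := by
      rw [h2, ENNReal.toReal_mul, ENNReal.toReal_ofReal (hr2 x).le]
    rw [e1, e2]
    set gr := (base.rnDeriv μt x).toReal
    set sr := (S.rnDeriv μt x).toReal with hsr
    have hsr0 : (0:ℝ) ≤ sr := ENNReal.toReal_nonneg
    have hz : 0 < Real.sqrt (r1 x * gr) + Real.sqrt (r2 x * gr) →
        psi (Real.sqrt (r2 x / r1 x))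
          = (Real.sqrt (r2 x * gr) - Real.sqrt (r1 x * gr))
            / (Real.sqrt (r1 x * gr) + Real.sqrt (r2 x * gr)) := by
      intro hab
      have hgrpos : 0 < gr := by
        rcases hgr.lt_or_eq with h | h
        · exact h
        · exfalso
          rw [← h, mul_zero, mul_zero, Real.sqrt_zero, add_zero] at hab
          exact lt_irrefl _ hab
      rw [Real.sqrt_mul (hr1 x).le, Real.sqrt_mul (hr2 x).le,
        Real.sqrt_div (hr2 x).le, psi]
      have h1p : 0 < Real.sqrt (r1 x) := Real.sqrt_pos.mpr (hr1 x)
      have h2p : 0 < Real.sqrt (r2 x) := Real.sqrt_pos.mpr (hr2 x)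
      have hgp : 0 < Real.sqrt gr := Real.sqrt_pos.mpr hgrpos
      field_simp
      ring
    have := bb_core (Real.sqrt sr) (Real.sqrt (r1 x * gr)) (Real.sqrt (r2 x * gr))
      (psi (Real.sqrt (r2 x / r1 x))) (Real.sqrt_nonneg _) (Real.sqrt_nonneg _)
      (Real.sqrt_nonneg _) (hpsi_le x) hz
    rwa [Real.sq_sqrt hsr0] at this
  -- put things together
  have h1 : ∫ x, (Real.sqrt (S.rnDeriv μt x).toReal - Real.sqrt (P1.rnDeriv μt x).toReal) ^ 2 ∂μt
      = 2 * hellingerSq S P1 := by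
    rw [bb_hellingerSq_eq S P1 μt hSle hP1le]; ring
  have h2 : ∫ x, (Real.sqrt (S.rnDeriv μt x).toReal - Real.sqrt (P2.rnDeriv μt x).toReal) ^ 2 ∂μt
      = 2 * hellingerSq S P2 := by
    rw [bb_hellingerSq_eq S P2 μt hSle hP2le]; ring
  calc ∫ x, psi (Real.sqrt (r2 x / r1 x)) ^ 2 ∂S
      = ∫ x, (S.rnDeriv μt x).toReal * psi (Real.sqrt (r2 x / r1 x)) ^ 2 ∂μt := hL
    _ ≤ ∫ x, ((Real.sqrt (S.rnDeriv μt x).toReal - Real.sqrt (P1.rnDeriv μt x).toReal) ^ 2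
          + (Real.sqrt (S.rnDeriv μt x).toReal - Real.sqrt (P2.rnDeriv μt x).toReal) ^ 2) ∂μt :=
        integral_mono_ae hInt1 (hI1.add hI2) hae
    _ = 2 * hellingerSq S P1 + 2 * hellingerSq S P2 := by
        rw [integral_add hI1 hI2, h1, h2]
    _ ≤ 3 * Real.sqrt 2 * (hellingerSq S P1 + hellingerSq S P2) := by
        nlinarith [bb_two_le, bb_hellingerSq_nonneg S P1, bb_hellingerSq_nonneg S P2]

end AuxStatement14

noncomputable section AuxStatement14b

open MeasureTheory

variable {W Y : Type*} [MeasurableSpace W] [MeasurableSpace Y]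
  {ν : Measure Y} {I : Set ℝ}

lemma bb_meas_r_comp [SigmaFinite ν] (E : ExpFamily ν I) (γ : W → ℝ)
    (hγm : Measurable γ) (hγ : ∀ w, γ w ∈ I) :
    Measurable (fun x : W × Y => E.r (γ x.1) x.2) := by
  have hu : Measurable fun w : W => E.u (γ w) := by
    have hsub : Measurable fun w : W => (⟨γ w, hγ w⟩ : I) := hγm.subtype_mk
    exact E.cont_u.restrict.measurable.comp hsub
  have hA : Measurable fun w : W => E.A (γ w) := by
    have hF : Measurable fun c : ℝ => ∫ y, Real.exp (c * E.T y) ∂ν := by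
      have hfm : StronglyMeasurable fun p : ℝ × Y => Real.exp (p.1 * E.T p.2) :=
        ((measurable_fst.mul (E.meas_T.comp measurable_snd)).exp).stronglyMeasurable
      exact hfm.integral_prod_right'.measurable
    have heq : (fun w : W => E.A (γ w))
        = fun w => Real.log (∫ y, Real.exp (E.u (γ w) * E.T y) ∂ν) := by
      funext w
      rw [← E.A_spec _ (hγ w), Real.log_exp]
    rw [heq]
    exact (hF.comp hu).log
  have : Measurable fun x : W × Y =>
      E.u (γ x.1) * E.T x.2 - E.A (γ x.1) :=
    ((hu.comp measurable_fst).mul (E.meas_T.comp measurable_snd)).sub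
      (hA.comp measurable_fst)
  exact this.exp

lemma bb_lintegral_r [SigmaFinite ν] (E : ExpFamily ν I) {γ0 : ℝ} (hγ0 : γ0 ∈ I) :
    ∫⁻ y, ENNReal.ofReal (E.r γ0 y) ∂ν = 1 := by
  have hpos : (0:ℝ) < Real.exp (E.A γ0) := Real.exp_pos _
  have hint : Integrable (fun y => Real.exp (E.u γ0 * E.T y)) ν := by
    by_contra h
    have hsp := E.A_spec γ0 hγ0
    rw [integral_undef h] at hsp
    exact (Real.exp_pos _).ne' hsp
  have hmeas : Measurable fun y => Real.exp (E.u γ0 * E.T y) :=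
    ((measurable_const.mul E.meas_T).exp)
  have key : ∫⁻ y, ENNReal.ofReal (Real.exp (E.u γ0 * E.T y)) ∂ν
      = ENNReal.ofReal (Real.exp (E.A γ0)) := by
    rw [← ofReal_integral_eq_lintegral_ofReal hint
      (Filter.Eventually.of_forall fun y => (Real.exp_pos _).le), ← E.A_spec γ0 hγ0]
  have hr : ∀ y, E.r γ0 y = Real.exp (- E.A γ0) * Real.exp (E.u γ0 * E.T y) := by
    intro y; rw [ExpFamily.r, ← Real.exp_add]; ring_nf
  calc ∫⁻ y, ENNReal.ofReal (E.r γ0 y) ∂ν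
      = ∫⁻ y, ENNReal.ofReal (Real.exp (- E.A γ0)) *
          ENNReal.ofReal (Real.exp (E.u γ0 * E.T y)) ∂ν := by
        refine lintegral_congr fun y => ?_
        rw [hr y, ENNReal.ofReal_mul (Real.exp_pos _).le]
    _ = ENNReal.ofReal (Real.exp (- E.A γ0)) *
          ∫⁻ y, ENNReal.ofReal (Real.exp (E.u γ0 * E.T y)) ∂ν := by
        rw [lintegral_const_mul _ hmeas.ennreal_ofReal]
    _ = 1 := by
        rw [key, ← ENNReal.ofReal_mul (Real.exp_pos _).le, ← Real.exp_add]
        simp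

lemma bb_jointOf_isProb [SigmaFinite ν] (E : ExpFamily ν I) (μ : Measure W)
    [IsProbabilityMeasure μ] (γ : W → ℝ) (hγm : Measurable γ) (hγ : ∀ w, γ w ∈ I) :
    IsProbabilityMeasure (jointOf E μ γ) := by
  constructor
  rw [jointOf, withDensity_apply _ MeasurableSet.univ, setLIntegral_univ]
  rw [MeasureTheory.lintegral_prod _
    ((bb_meas_r_comp E γ hγm hγ).ennreal_ofReal).aemeasurable]
  have : ∀ w : W, ∫⁻ y, ENNReal.ofReal (E.r (γ w) y) ∂ν = 1 :=
    fun w => bb_lintegral_r E (hγ w)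
  simp only [this, lintegral_one, measure_univ]

end AuxStatement14b

/-- **Second-moment bound for the `ψ`-statistics ((11) of Baraud–Birgé 2018 with
`a₂² = 3√2`).** For all measurable `γ1, γ2 : W → I` and any true distribution of the
independent data `Xᵢ = (Wᵢ, Yᵢ)`,
`Σᵢ E[ψ²(√(r_{γ2(Wᵢ)}(Yᵢ)/r_{γ1(Wᵢ)}(Yᵢ)))] ≤ 3√2 (h²(P*,P_{γ1}) + h²(P*,P_{γ2}))`;
in particular, if `h²(P*,P_{γ1}) + h²(P*,P_{γ2}) < y²` then the sum is at most `3√2 y²`. -/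
theorem statement14 (W Y : Type) [MeasurableSpace W] [MeasurableSpace Y]
    (ν : Measure Y) [SigmaFinite ν] (I : Set ℝ) (E : ExpFamily ν I) (n : ℕ)
    (μW : Fin n → Measure W) [∀ i, IsProbabilityMeasure (μW i)]
    (Rstar : Fin n → Kernel W Y) [∀ i, IsMarkovKernel (Rstar i)]
    (γ1 γ2 : W → ℝ) (hγ1m : Measurable γ1) (hγ2m : Measurable γ2)
    (hγ1 : ∀ w, γ1 w ∈ I) (hγ2 : ∀ w, γ2 w ∈ I) :
    (∑ i, ∫ x : W × Y, (psi (Real.sqrt (E.r (γ2 x.1) x.2 / E.r (γ1 x.1) x.2))) ^ 2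
        ∂((μW i).compProd (Rstar i)))
      ≤ 3 * Real.sqrt 2 *
        (prodHellingerSq (fun i => (μW i).compProd (Rstar i)) (fun i => jointOf E (μW i) γ1)
         + prodHellingerSq (fun i => (μW i).compProd (Rstar i))
            (fun i => jointOf E (μW i) γ2)) ∧
    (∀ y : ℝ, 0 < y →
      prodHellingerSq (fun i => (μW i).compProd (Rstar i)) (fun i => jointOf E (μW i) γ1)
        + prodHellingerSq (fun i => (μW i).compProd (Rstar i))
            (fun i => jointOf E (μW i) γ2) < y ^ 2 →
      (∑ i, ∫ x : W × Y, (psi (Real.sqrt (E.r (γ2 x.1) x.2 / E.r (γ1 x.1) x.2))) ^ 2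
          ∂((μW i).compProd (Rstar i)))
        ≤ 3 * Real.sqrt 2 * y ^ 2) := by
  
  have hr1m := bb_meas_r_comp E γ1 hγ1m hγ1
  have hr2m := bb_meas_r_comp E γ2 hγ2m hγ2
  have key : ∀ i : Fin n,
      ∫ x : W × Y, (psi (Real.sqrt (E.r (γ2 x.1) x.2 / E.r (γ1 x.1) x.2))) ^ 2
          ∂((μW i).compProd (Rstar i))
        ≤ 3 * Real.sqrt 2 *
          (hellingerSq ((μW i).compProd (Rstar i)) (jointOf E (μW i) γ1)
            + hellingerSq ((μW i).compProd (Rstar i)) (jointOf E (μW i) γ2)) := by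
    intro i
    haveI h01 : IsProbabilityMeasure (jointOf E (μW i) γ1) :=
      bb_jointOf_isProb E (μW i) γ1 hγ1m hγ1
    haveI h02 : IsProbabilityMeasure (jointOf E (μW i) γ2) :=
      bb_jointOf_isProb E (μW i) γ2 hγ2m hγ2
    exact bb_key_single ((μW i).compProd (Rstar i)) (jointOf E (μW i) γ1)
      (jointOf E (μW i) γ2) ((μW i).prod ν)
      (fun x => E.r (γ1 x.1) x.2) (fun x => E.r (γ2 x.1) x.2) hr1m hr2m
      (fun x => Real.exp_pos _) (fun x => Real.exp_pos _) rfl rfl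
  have main : (∑ i, ∫ x : W × Y,
        (psi (Real.sqrt (E.r (γ2 x.1) x.2 / E.r (γ1 x.1) x.2))) ^ 2
          ∂((μW i).compProd (Rstar i)))
      ≤ 3 * Real.sqrt 2 *
        (prodHellingerSq (fun i => (μW i).compProd (Rstar i)) (fun i => jointOf E (μW i) γ1)
         + prodHellingerSq (fun i => (μW i).compProd (Rstar i))
            (fun i => jointOf E (μW i) γ2)) := by
    calc (∑ i, ∫ x : W × Y,
          (psi (Real.sqrt (E.r (γ2 x.1) x.2 / E.r (γ1 x.1) x.2))) ^ 2
            ∂((μW i).compProd (Rstar i)))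
        ≤ ∑ i, 3 * Real.sqrt 2 *
            (hellingerSq ((μW i).compProd (Rstar i)) (jointOf E (μW i) γ1)
              + hellingerSq ((μW i).compProd (Rstar i)) (jointOf E (μW i) γ2)) :=
          Finset.sum_le_sum fun i _ => key i
      _ = 3 * Real.sqrt 2 *
          (prodHellingerSq (fun i => (μW i).compProd (Rstar i))
              (fun i => jointOf E (μW i) γ1)
            + prodHellingerSq (fun i => (μW i).compProd (Rstar i))
              (fun i => jointOf E (μW i) γ2)) := by
          rw [prodHellingerSq, prodHellingerSq, ← Finset.mul_sum, ← Finset.sum_add_distrib]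
  refine ⟨main, fun y hy hlt => ?_⟩
  refine le_trans main ?_
  have h32 : (0:ℝ) ≤ 3 * Real.sqrt 2 := by positivity
  exact mul_le_mul_of_nonneg_left hlt.le h32
end
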